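/- Let g : [0,S] × [0,T] → [0,∞) be a bounded measurable function satisfying g(s,t) ≤ C(1 + ∫₀^s g(s',t) ds' + ∫₀^t g(s,t') dt') for all (s,t) and some constant C ≥ 0. Then g(s,t) ≤ C·e^{2C(s+t)}·e^{C²st} is bounded; in particular, there is a constant C' depending only on C, S, T such that g(s,t) ≤ C' for all (s,t) ∈ [0,S]×[0,T]. -/

import Mathlib

/-!
Let `h r` be the supremum of `g` over the triangle `{s + t ≤ r}` of the rectangle. Each of the two
one-dimensional integrals in the hypothesis runs along a segment of that triangle, and, after a
shift, is bounded by `∫₀^r h`; hence `h r ≤ C + 2C ∫₀^r h`. The one-variable Gronwall inequality,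
proved by iterating this bound (the boundedness of `g` controls the remainder `B (Kr)ⁿ / n!`),
gives `h r ≤ C e^{2Cr}`, which is even better than the claimed bound.
-/

open MeasureTheory Set intervalIntegral Real

lemma intervalIntegrable_of_norm_le {f : ℝ → ℝ} (hf : Measurable f) {M : ℝ}
    (hM : ∀ x, ‖f x‖ ≤ M) (a b : ℝ) : IntervalIntegrable f volume a b :=
  intervalIntegrable_iff.2 <|
    IntegrableOn.of_bound measure_Ioc_lt_top hf.aestronglyMeasurable M (ae_of_all _ hM)

lemma MonotoneOn.intervalIntegrable_of_Ici {h : ℝ → ℝ} {a b c : ℝ} (hmono : MonotoneOn h (Ici a))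
    (hb : a ≤ b) (hc : a ≤ c) : IntervalIntegrable h volume b c :=
  (hmono.mono fun _ hx => (le_min hb hc).trans hx.1).intervalIntegrable

lemma integral_le_integral_of_le_comp_add {φ h : ℝ → ℝ} {a c r : ℝ} (ha : 0 ≤ a) (hc : 0 ≤ c)
    (hr : a + c ≤ r) (hφ : IntervalIntegrable φ volume 0 a) (hmono : MonotoneOn h (Ici 0))
    (hh : ∀ x, 0 ≤ x → 0 ≤ h x) (hle : ∀ x ∈ Icc 0 a, φ x ≤ h (x + c)) :
    ∫ x in 0..a, φ x ≤ ∫ x in 0..r, h x := by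
  have hmono_shift : MonotoneOn (fun x => h (x + c)) (Ici 0) := fun x hx y hy hxy =>
    hmono (add_nonneg hx hc) (add_nonneg hy hc) (by simpa using hxy)
  calc ∫ x in 0..a, φ x ≤ ∫ x in 0..a, h (x + c) :=
        integral_mono_on ha hφ (hmono_shift.intervalIntegrable_of_Ici le_rfl ha) hle
    _ = ∫ x in c..a + c, h x := by simp [integral_comp_add_right h c]
    _ ≤ ∫ x in 0..r, h x :=
      integral_mono_interval hc (by linarith) hr
        (ae_restrict_of_forall_mem measurableSet_Ioc fun x hx => hh x hx.1.le)
        (hmono.intervalIntegrable_of_Ici le_rfl (by linarith))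

section Gronwall

/-- The bound after `n` Picard iterations of `h ≤ a + K ∫₀^r h`, starting from `h ≤ B`. -/
noncomputable def picardBound (a K B : ℝ) (n : ℕ) (r : ℝ) : ℝ :=
  a * exp (K * r) + B * (K * r) ^ n / n.factorial

lemma continuous_picardBound (a K B : ℝ) (n : ℕ) : Continuous (picardBound a K B n) := by
  unfold picardBound; fun_prop

lemma hasDerivAt_picardBound_succ (a K B : ℝ) (n : ℕ) (r : ℝ) :
    HasDerivAt (picardBound a K B (n + 1)) (K * picardBound a K B n r) r := by
  have hlin : HasDerivAt (fun u => K * u) K r := by simpa using (hasDerivAt_id r).const_mul K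
  have hd := (hlin.exp.const_mul a).add
    (((hlin.pow (n + 1)).const_mul B).div_const ((n + 1).factorial : ℝ))
  refine hd.congr_deriv ?_
  simp only [picardBound, Nat.factorial_succ, Nat.cast_mul, Nat.add_sub_cancel]
  field_simp

lemma add_mul_integral_picardBound (a K B : ℝ) (n : ℕ) (r : ℝ) :
    a + K * ∫ u in 0..r, picardBound a K B n u = picardBound a K B (n + 1) r := by
  rw [← intervalIntegral.integral_const_mul, integral_eq_sub_of_hasDerivAt
    (fun u _ => hasDerivAt_picardBound_succ a K B n u)
    (((continuous_picardBound a K B n).const_mul K).intervalIntegrable _ _)]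
  simp [picardBound]

variable {h : ℝ → ℝ} {a K B R : ℝ}

lemma le_picardBound (ha : 0 ≤ a) (hK : 0 ≤ K) (hint : IntervalIntegrable h volume 0 R)
    (hB : ∀ r ∈ Icc 0 R, h r ≤ B) (hle : ∀ r ∈ Icc 0 R, h r ≤ a + K * ∫ u in 0..r, h u) :
    ∀ n : ℕ, ∀ r ∈ Icc 0 R, h r ≤ picardBound a K B n r := by
  intro n
  induction n with
  | zero =>
    intro r hr
    have : 0 ≤ a * exp (K * r) := by positivity
    simp only [picardBound, pow_zero, Nat.factorial_zero, Nat.cast_one, div_one, mul_one]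
    linarith [hB r hr]
  | succ n ih =>
    intro r hr
    have hint_r : IntervalIntegrable h volume 0 r :=
      hint.mono_set (uIcc_subset_uIcc_left (by rw [uIcc_of_le (hr.1.trans hr.2)]; exact hr))
    calc h r ≤ a + K * ∫ u in 0..r, h u := hle r hr
      _ ≤ a + K * ∫ u in 0..r, picardBound a K B n u := by
        gcongr
        exact integral_mono_on hr.1 hint_r
          ((continuous_picardBound a K B n).intervalIntegrable _ _)
          fun u hu => ih u ⟨hu.1, hu.2.trans hr.2⟩
      _ = picardBound a K B (n + 1) r := add_mul_integral_picardBound a K B n r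

lemma le_mul_exp_of_le_add_mul_integral (ha : 0 ≤ a) (hK : 0 ≤ K)
    (hint : IntervalIntegrable h volume 0 R) (hB : ∀ r ∈ Icc 0 R, h r ≤ B)
    (hle : ∀ r ∈ Icc 0 R, h r ≤ a + K * ∫ u in 0..r, h u) :
    ∀ r ∈ Icc 0 R, h r ≤ a * exp (K * r) := by
  intro r hr
  have hlim : Filter.Tendsto (fun n => picardBound a K B n r) Filter.atTop
      (nhds (a * exp (K * r))) := by
    simpa [picardBound, mul_div_assoc] using
      ((FloorSemiring.tendsto_pow_div_factorial_atTop (K * r)).const_mul B).const_add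
        (a * exp (K * r))
  exact ge_of_tendsto' hlim fun n => le_picardBound ha hK hint hB hle n r hr

end Gronwall

section DiagonalSupremum

noncomputable def diagSup (g : ℝ → ℝ → ℝ) (S T r : ℝ) : ℝ :=
  sSup (Function.uncurry g '' (Icc 0 S ×ˢ Icc 0 T ∩ {p | p.1 + p.2 ≤ r}))

variable {g : ℝ → ℝ → ℝ} {S T B r : ℝ}

lemma bddAbove_image_diag (hbdd : ∀ s t, g s t ≤ B) :
    BddAbove (Function.uncurry g '' (Icc 0 S ×ˢ Icc 0 T ∩ {p | p.1 + p.2 ≤ r})) :=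
  ⟨B, by rintro _ ⟨⟨s, t⟩, -, rfl⟩; exact hbdd s t⟩

lemma image_diag_nonempty (hS : 0 ≤ S) (hT : 0 ≤ T) (hr : 0 ≤ r) :
    (Function.uncurry g '' (Icc 0 S ×ˢ Icc 0 T ∩ {p | p.1 + p.2 ≤ r})).Nonempty :=
  ⟨g 0 0, (0, 0), ⟨⟨⟨le_rfl, hS⟩, ⟨le_rfl, hT⟩⟩, by simpa using hr⟩, rfl⟩

lemma le_diagSup (hbdd : ∀ s t, g s t ≤ B) {s t : ℝ} (hs : s ∈ Icc 0 S) (ht : t ∈ Icc 0 T)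
    (hr : s + t ≤ r) : g s t ≤ diagSup g S T r :=
  le_csSup (bddAbove_image_diag hbdd) ⟨(s, t), ⟨⟨hs, ht⟩, hr⟩, rfl⟩

lemma diagSup_le (hS : 0 ≤ S) (hT : 0 ≤ T) (hbdd : ∀ s t, g s t ≤ B) (hr : 0 ≤ r) :
    diagSup g S T r ≤ B :=
  csSup_le (image_diag_nonempty hS hT hr) (by rintro _ ⟨⟨s, t⟩, -, rfl⟩; exact hbdd s t)

lemma diagSup_nonneg (hS : 0 ≤ S) (hT : 0 ≤ T) (hnonneg : ∀ s t, 0 ≤ g s t)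
    (hbdd : ∀ s t, g s t ≤ B) (hr : 0 ≤ r) : 0 ≤ diagSup g S T r :=
  (hnonneg 0 0).trans (le_diagSup hbdd ⟨le_rfl, hS⟩ ⟨le_rfl, hT⟩ (by simpa using hr))

lemma monotoneOn_diagSup (hS : 0 ≤ S) (hT : 0 ≤ T) (hbdd : ∀ s t, g s t ≤ B) :
    MonotoneOn (diagSup g S T) (Ici 0) := fun _ hr₁ _ _ hr =>
  csSup_le_csSup (bddAbove_image_diag hbdd) (image_diag_nonempty hS hT hr₁)
    (image_mono (inter_subset_inter_right _ fun _ hp => le_trans (α := ℝ) hp hr))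

lemma diagSup_le_add_mul_integral {C : ℝ} (hS : 0 ≤ S) (hT : 0 ≤ T)
    (hmeas : Measurable (Function.uncurry g)) (hnonneg : ∀ s t, 0 ≤ g s t)
    (hbdd : ∀ s t, g s t ≤ B) (hC : 0 ≤ C)
    (hineq : ∀ s ∈ Icc (0:ℝ) S, ∀ t ∈ Icc (0:ℝ) T,
      g s t ≤ C * (1 + (∫ s' in (0:ℝ)..s, g s' t) + ∫ t' in (0:ℝ)..t, g s t'))
    (hr : 0 ≤ r) :
    diagSup g S T r ≤ C + 2 * C * ∫ u in 0..r, diagSup g S T u := by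
  refine csSup_le (image_diag_nonempty hS hT hr) ?_
  rintro _ ⟨⟨s, t⟩, ⟨⟨hs, ht⟩, hst : s + t ≤ r⟩, rfl⟩
  have hbound : ∀ s t, ‖g s t‖ ≤ B := fun s t => by
    rw [Real.norm_of_nonneg (hnonneg s t)]; exact hbdd s t
  have hmono := monotoneOn_diagSup hS hT hbdd
  have hpos : ∀ x, 0 ≤ x → 0 ≤ diagSup g S T x := fun x hx =>
    diagSup_nonneg hS hT hnonneg hbdd hx
  have h₁ : ∫ s' in 0..s, g s' t ≤ ∫ u in 0..r, diagSup g S T u :=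
    integral_le_integral_of_le_comp_add hs.1 ht.1 hst
      (intervalIntegrable_of_norm_le hmeas.of_uncurry_right (fun x => hbound x t) _ _)
      hmono hpos fun x hx => le_diagSup hbdd ⟨hx.1, hx.2.trans hs.2⟩ ht le_rfl
  have h₂ : ∫ t' in 0..t, g s t' ≤ ∫ u in 0..r, diagSup g S T u :=
    integral_le_integral_of_le_comp_add ht.1 hs.1 (by linarith)
      (intervalIntegrable_of_norm_le hmeas.of_uncurry_left (hbound s) _ _)
      hmono hpos fun x hx => le_diagSup hbdd hs ⟨hx.1, hx.2.trans ht.2⟩ (by linarith)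
  calc g s t ≤ C * (1 + (∫ s' in 0..s, g s' t) + ∫ t' in 0..t, g s t') := hineq s hs t ht
    _ ≤ C * (1 + (∫ u in 0..r, diagSup g S T u) + ∫ u in 0..r, diagSup g S T u) := by gcongr
    _ = C + 2 * C * ∫ u in 0..r, diagSup g S T u := by ring

end DiagonalSupremum

/-- Two-parameter Gronwall inequality: a bounded nonnegative measurable `g` with
`g(s,t) ≤ C(1 + ∫₀^s g(s',t) ds' + ∫₀^t g(s,t') dt')` satisfies the explicit bound
`g(s,t) ≤ C e^{2C(s+t)} e^{C² s t}` on `[0,S] × [0,T]`. -/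
theorem stmt9 (S T : ℝ) (hS : 0 ≤ S) (hT : 0 ≤ T) (g : ℝ → ℝ → ℝ)
    (hmeas : Measurable (Function.uncurry g))
    (hnonneg : ∀ s t, 0 ≤ g s t)
    (B : ℝ) (hbdd : ∀ s t, g s t ≤ B)
    (C : ℝ) (hC : 0 ≤ C)
    (hineq : ∀ s ∈ Set.Icc (0:ℝ) S, ∀ t ∈ Set.Icc (0:ℝ) T,
      g s t ≤ C * (1 + (∫ s' in (0:ℝ)..s, g s' t) + ∫ t' in (0:ℝ)..t, g s t')) :
    ∀ s ∈ Set.Icc (0:ℝ) S, ∀ t ∈ Set.Icc (0:ℝ) T,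
      g s t ≤ C * Real.exp (2 * C * (s + t)) * Real.exp (C ^ 2 * s * t) := by
  intro s hs t ht
  have hint : IntervalIntegrable (diagSup g S T) volume 0 (S + T) :=
    (monotoneOn_diagSup hS hT hbdd).intervalIntegrable_of_Ici le_rfl (add_nonneg hS hT)
  have hgronwall : ∀ r ∈ Icc 0 (S + T), diagSup g S T r ≤ C * exp (2 * C * r) :=
    le_mul_exp_of_le_add_mul_integral hC (by positivity) hint
      (fun r hr => diagSup_le hS hT hbdd hr.1)
      (fun r hr => diagSup_le_add_mul_integral hS hT hmeas hnonneg hbdd hC hineq hr.1)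
  have hst : s + t ∈ Icc 0 (S + T) := ⟨add_nonneg hs.1 ht.1, add_le_add hs.2 ht.2⟩
  calc g s t ≤ diagSup g S T (s + t) := le_diagSup hbdd hs ht le_rfl
    _ ≤ C * exp (2 * C * (s + t)) := hgronwall _ hst
    _ ≤ C * exp (2 * C * (s + t)) * exp (C ^ 2 * s * t) :=
      le_mul_of_one_le_right (by positivity)
        (one_le_exp (mul_nonneg (mul_nonneg (sq_nonneg C) hs.1) ht.1))
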